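/- Power-series von Neumann inequality for operators of norm at most R/3: Let X be a complex Banach space, R > 0, and let T be a bounded linear operator on X with ‖T‖ ≤ R/3. Let f be a bounded holomorphic function on the open disk D_R = {z ∈ ℂ : |z| < R} with power series expansion f(z) = ∑_{n=0}^∞ a_n z^n. Then the series ∑_{n=0}^∞ a_n T^n converges absolutely in operator norm and ‖∑_{n=0}^∞ a_n T^n‖ ≤ sup_{w ∈ D_R} |f(w)|. -/

import Mathlib

/-!
Let `M = sup_{D_R} ‖f‖`. The heart of the matter is Wiener's coefficient inequality
`‖aₘ‖ Rᵐ ≤ 2 (M - ‖a₀‖)` for `m ≥ 1`. Averaging `f` over the rotations of `z` by the `m`-th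
roots of unity kills every coefficient except the `a_{km}`, so `g(w) = ∑ₖ a_{km} wᵏ` is again
bounded by `M` on `D_{Rᵐ}`; its first two coefficients are `a₀` and `aₘ`, and the Schwarz–Pick
inequality `‖g'(0)‖ r ≤ M - ‖g(0)‖² / M` (the Schwarz lemma composed with a disk automorphism)
gives the bound. With `‖T‖ ≤ R/3` this yields
`∑ ‖aₙ Tⁿ‖ ≤ ‖a₀‖ + 2 (M - ‖a₀‖) ∑_{n ≥ 1} 3⁻ⁿ = M`.
-/

open Metric Complex ComplexConjugate Finset

noncomputable def diskMobius (α w : ℂ) : ℂ := (w - α) / (1 - conj α * w)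

lemma diskMobius_self (α : ℂ) : diskMobius α α = 0 := by simp [diskMobius]

lemma normSq_one_sub_conj_mul_sub_normSq_sub (α w : ℂ) :
    normSq (1 - conj α * w) - normSq (w - α) = (1 - normSq α) * (1 - normSq w) := by
  simp only [normSq_apply, sub_re, sub_im, mul_re, mul_im, one_re, one_im, conj_re, conj_im]
  ring

lemma norm_sub_lt_norm_one_sub_conj_mul {α w : ℂ} (hα : ‖α‖ < 1) (hw : ‖w‖ < 1) :
    ‖w - α‖ < ‖1 - conj α * w‖ := by
  have hα' : normSq α < 1 := by rw [← Complex.sq_norm]; nlinarith [norm_nonneg α]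
  have hw' : normSq w < 1 := by rw [← Complex.sq_norm]; nlinarith [norm_nonneg w]
  have := normSq_one_sub_conj_mul_sub_normSq_sub α w
  rw [norm_def, norm_def]
  exact Real.sqrt_lt_sqrt (normSq_nonneg _) (by nlinarith)

lemma norm_diskMobius_lt_one {α w : ℂ} (hα : ‖α‖ < 1) (hw : ‖w‖ < 1) :
    ‖diskMobius α w‖ < 1 := by
  have h := norm_sub_lt_norm_one_sub_conj_mul hα hw
  rw [diskMobius, norm_div, div_lt_one ((norm_nonneg _).trans_lt h)]
  exact h

lemma one_sub_conj_mul_ne_zero {α w : ℂ} (hα : ‖α‖ < 1) (hw : ‖w‖ < 1) :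
    1 - conj α * w ≠ 0 :=
  norm_pos_iff.1 ((norm_nonneg _).trans_lt (norm_sub_lt_norm_one_sub_conj_mul hα hw))

lemma differentiableOn_diskMobius {α : ℂ} (hα : ‖α‖ < 1) :
    DifferentiableOn ℂ (diskMobius α) (ball 0 1) := fun _ hw ↦
  ((differentiableAt_id.sub_const α).div ((differentiableAt_const _).sub
    (differentiableAt_id.const_mul _))
    (one_sub_conj_mul_ne_zero hα (mem_ball_zero_iff.1 hw))).differentiableWithinAt

lemma hasDerivAt_diskMobius_self {α : ℂ} (hα : ‖α‖ < 1) :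
    HasDerivAt (diskMobius α) (1 - conj α * α)⁻¹ α := by
  have hne := one_sub_conj_mul_ne_zero hα hα
  have h := ((hasDerivAt_id α).sub_const α).div
    (((hasDerivAt_id α).const_mul (conj α)).const_sub 1) hne
  simp only [id, sub_self, mul_one, zero_mul, sub_zero, one_mul] at h
  exact h.congr_deriv (by field_simp)

lemma norm_one_sub_conj_mul_self (α : ℂ) : ‖1 - conj α * α‖ = |1 - ‖α‖ ^ 2| := by
  rw [mul_comm, mul_conj', ← ofReal_pow, ← ofReal_one, ← ofReal_sub, norm_real, Real.norm_eq_abs]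

theorem norm_deriv_mul_le_one_sub_sq {h : ℂ → ℂ} {ρ : ℝ} (hρ : 0 < ρ)
    (hd : DifferentiableOn ℂ h (ball 0 ρ)) (hmaps : Set.MapsTo h (ball 0 ρ) (ball 0 1)) :
    ‖deriv h 0‖ * ρ ≤ 1 - ‖h 0‖ ^ 2 := by
  have h0 : (0 : ℂ) ∈ ball 0 ρ := mem_ball_self hρ
  have hα : ‖h 0‖ < 1 := mem_ball_zero_iff.1 (hmaps h0)
  have hα' : 0 < 1 - ‖h 0‖ ^ 2 := by nlinarith [norm_nonneg (h 0)]
  have hG : DifferentiableOn ℂ (diskMobius (h 0) ∘ h) (ball 0 ρ) :=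
    (differentiableOn_diskMobius hα).comp hd hmaps
  have hGmaps : Set.MapsTo (diskMobius (h 0) ∘ h) (ball 0 ρ)
      (closedBall ((diskMobius (h 0) ∘ h) 0) 1) := fun z hz ↦ by
    simpa [diskMobius_self] using
      (norm_diskMobius_lt_one hα (mem_ball_zero_iff.1 (hmaps hz))).le
  have hderiv : deriv (diskMobius (h 0) ∘ h) 0 = (1 - conj (h 0) * h 0)⁻¹ * deriv h 0 :=
    ((hasDerivAt_diskMobius_self hα).comp 0
      (hd.differentiableAt (isOpen_ball.mem_nhds h0)).hasDerivAt).deriv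
  have hschwarz := Complex.norm_deriv_le_div_of_mapsTo_ball hG hGmaps hρ
  rw [hderiv, norm_mul, norm_inv, norm_one_sub_conj_mul_self, abs_of_pos hα',
    inv_mul_eq_div, div_le_div_iff₀ hα' hρ] at hschwarz
  linarith

theorem hasFPowerSeriesOnBall_ofScalars_of_hasSum {c : ℕ → ℂ} {g : ℂ → ℂ} {r : ℝ} (hr : 0 < r)
    (hg : ∀ w ∈ ball (0 : ℂ) r, HasSum (fun k ↦ c k * w ^ k) (g w)) :
    HasFPowerSeriesOnBall g (FormalMultilinearSeries.ofScalars ℂ c) 0 (ENNReal.ofReal r) := by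
  refine ⟨?_, ENNReal.ofReal_pos.2 hr, fun {w} hw ↦ ?_⟩
  · refine ENNReal.le_of_forall_nnreal_lt fun s hs ↦ ?_
    rw [← ENNReal.ofReal_coe_nnreal, ENNReal.ofReal_lt_ofReal_iff hr] at hs
    have hs' : ((s : ℝ) : ℂ) ∈ ball (0 : ℂ) r := by simpa [abs_of_nonneg s.coe_nonneg] using hs
    refine FormalMultilinearSeries.le_radius_of_tendsto _ (l := 0) ?_
    simpa [FormalMultilinearSeries.ofScalars_norm, abs_of_nonneg s.coe_nonneg] using
      (hg _ hs').summable.tendsto_atTop_zero.norm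
  · rw [eball_ofReal, zero_add] at *
    simpa [FormalMultilinearSeries.ofScalars_apply_eq, mul_comm] using hg w hw

lemma hasSum_mul_zero_pow (c : ℕ → ℂ) : HasSum (fun k ↦ c k * 0 ^ k) (c 0) := by
  convert hasSum_ite_eq 0 (c 0) using 2 with k
  rcases eq_or_ne k 0 with rfl | hk <;> simp [*]

theorem norm_coeff_one_mul_le {c : ℕ → ℂ} {g : ℂ → ℂ} {r M : ℝ} (hr : 0 < r)
    (hg : ∀ w ∈ ball (0 : ℂ) r, HasSum (fun k ↦ c k * w ^ k) (g w))
    (hM : ∀ w ∈ ball (0 : ℂ) r, ‖g w‖ ≤ M) :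
    ‖c 1‖ * r ≤ 2 * (M - ‖c 0‖) := by
  have hps := hasFPowerSeriesOnBall_ofScalars_of_hasSum hr hg
  have hd : DifferentiableOn ℂ g (ball 0 r) := by simpa [eball_ofReal] using hps.differentiableOn
  have hderiv : deriv g 0 = c 1 := by simp [hps.hasFPowerSeriesAt.deriv]
  have hg0 : g 0 = c 0 := (hg 0 (mem_ball_self hr)).unique (hasSum_mul_zero_pow c)
  have hc0 : ‖c 0‖ ≤ M := hg0 ▸ hM 0 (mem_ball_self hr)
  -- Schwarz–Pick needs `‖g 0‖ < M`, so we normalise by an arbitrary `M' > M` instead of `M`.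
  suffices ∀ M', M < M' → ‖c 1‖ * r / 2 + ‖c 0‖ ≤ M' by
    linarith [le_of_forall_gt_imp_ge_of_dense this]
  intro M' hM'
  have hM'pos : 0 < M' := (norm_nonneg _).trans_lt (hc0.trans_lt hM')
  have hmaps : Set.MapsTo (fun w ↦ g w / M') (ball 0 r) (ball 0 1) := fun w hw ↦ by
    rw [mem_ball_zero_iff, norm_div, norm_real, Real.norm_of_nonneg hM'pos.le,
      div_lt_one hM'pos]
    exact (hM w hw).trans_lt hM'
  have hpick := norm_deriv_mul_le_one_sub_sq hr (hd.div_const _) hmaps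
  rw [deriv_div_const, hderiv, hg0, norm_div, norm_div, norm_real,
    Real.norm_of_nonneg hM'pos.le] at hpick
  have hpick' : ‖c 1‖ * r * M' ≤ M' ^ 2 - ‖c 0‖ ^ 2 := by
    have := mul_le_mul_of_nonneg_right hpick (sq_nonneg M')
    field_simp at this
    linarith
  nlinarith [norm_nonneg (c 0)]

lemma IsPrimitiveRoot.sum_pow_mul_eq_ite {R : Type*} [CommRing R] [IsDomain R] {ζ : R} {m : ℕ}
    (hζ : IsPrimitiveRoot ζ m) (n : ℕ) :
    ∑ j ∈ range m, ζ ^ (j * n) = if m ∣ n then (m : R) else 0 := by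
  simp_rw [mul_comm _ n, pow_mul]
  split_ifs with hdvd
  · simp [(hζ.pow_eq_one_iff_dvd n).2 hdvd]
  · have hne : ζ ^ n - 1 ≠ 0 := sub_ne_zero.2 fun h ↦ hdvd ((hζ.pow_eq_one_iff_dvd n).1 h)
    have h := geom_sum_mul (ζ ^ n) m
    rw [← pow_mul, mul_comm n m, pow_mul, hζ.pow_eq_one, one_pow, sub_self] at h
    exact (mul_eq_zero.1 h).resolve_right hne

lemma hasSum_coeff_mul_pow_of_isPrimitiveRoot {a : ℕ → ℂ} {F : ℂ → ℂ} {ζ z : ℂ} {m : ℕ}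
    (hm : m ≠ 0) (hζ : IsPrimitiveRoot ζ m)
    (ha : ∀ j, HasSum (fun n ↦ a n * (ζ ^ j * z) ^ n) (F (ζ ^ j * z))) :
    HasSum (fun k ↦ a (k * m) * (z ^ m) ^ k) ((∑ j ∈ range m, F (ζ ^ j * z)) / m) := by
  have hsum := hasSum_sum (s := range m) fun j _ ↦ ha j
  have hterm : ∀ n, ∑ j ∈ range m, a n * (ζ ^ j * z) ^ n
      = if m ∣ n then m * (a n * z ^ n) else 0 := fun n ↦ by
    simp_rw [mul_pow, ← pow_mul, mul_left_comm (a n), ← mul_assoc, ← sum_mul,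
      hζ.sum_pow_mul_eq_ite]
    split_ifs <;> ring
  simp_rw [hterm] at hsum
  have hinj : Function.Injective (· * m) := fun _ _ ↦ (Nat.mul_left_inj hm).1
  rw [← hinj.hasSum_iff fun n hn ↦ if_neg fun ⟨k, hk⟩ ↦ hn ⟨k, by simp [hk, mul_comm]⟩] at hsum
  refine (hsum.div_const (m : ℂ)).congr_fun fun k ↦ ?_
  simp [← pow_mul, mul_comm m k, Nat.cast_ne_zero.2 hm]

lemma exists_hasSum_coeff_mul_pow_norm_le {R M : ℝ} (hR : 0 ≤ R) {f : ℂ → ℂ} {a : ℕ → ℂ}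
    (ha : ∀ z ∈ ball (0 : ℂ) R, HasSum (fun n ↦ a n * z ^ n) (f z))
    (hM : ∀ z ∈ ball (0 : ℂ) R, ‖f z‖ ≤ M) {m : ℕ} (hm : m ≠ 0) {w : ℂ}
    (hw : w ∈ ball (0 : ℂ) (R ^ m)) :
    ∃ S, HasSum (fun k ↦ a (k * m) * w ^ k) S ∧ ‖S‖ ≤ M := by
  obtain ⟨z, rfl⟩ := IsAlgClosed.exists_pow_nat_eq w (Nat.pos_of_ne_zero hm)
  have hz : ‖z‖ < R := by
    rw [mem_ball_zero_iff, norm_pow] at hw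
    exact (pow_lt_pow_iff_left₀ (norm_nonneg z) hR hm).1 hw
  obtain ⟨ζ, hζ⟩ : ∃ ζ : ℂ, IsPrimitiveRoot ζ m := ⟨_, isPrimitiveRoot_exp m hm⟩
  have hmem : ∀ j, ζ ^ j * z ∈ ball (0 : ℂ) R := fun j ↦ by
    simpa [hζ.norm'_eq_one hm] using hz
  refine ⟨_, hasSum_coeff_mul_pow_of_isPrimitiveRoot hm hζ fun j ↦ ha _ (hmem j), ?_⟩
  rw [norm_div, Complex.norm_natCast, div_le_iff₀' (by positivity)]
  calc ‖∑ j ∈ range m, f (ζ ^ j * z)‖ ≤ ∑ j ∈ range m, ‖f (ζ ^ j * z)‖ := norm_sum_le _ _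
    _ ≤ ∑ _j ∈ range m, M := sum_le_sum fun j _ ↦ hM _ (hmem j)
    _ = m * M := by simp

theorem norm_coeff_mul_pow_le {R M : ℝ} (hR : 0 < R) {f : ℂ → ℂ} {a : ℕ → ℂ}
    (ha : ∀ z ∈ ball (0 : ℂ) R, HasSum (fun n ↦ a n * z ^ n) (f z))
    (hM : ∀ z ∈ ball (0 : ℂ) R, ‖f z‖ ≤ M) {m : ℕ} (hm : m ≠ 0) :
    ‖a m‖ * R ^ m ≤ 2 * (M - ‖a 0‖) := by
  choose! g hg hgM using fun w (hw : w ∈ ball (0 : ℂ) (R ^ m)) ↦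
    exists_hasSum_coeff_mul_pow_norm_le hR.le ha hM hm hw
  simpa using norm_coeff_one_mul_le (c := fun k ↦ a (k * m)) (pow_pos hR m) hg hgM

lemma ContinuousLinearMap.norm_pow_le_pow_norm {𝕜 E : Type*} [NontriviallyNormedField 𝕜]
    [SeminormedAddCommGroup E] [NormedSpace 𝕜 E] (T : E →L[𝕜] E) (n : ℕ) :
    ‖T ^ n‖ ≤ ‖T‖ ^ n := by
  rcases n with _ | n
  · simpa [ContinuousLinearMap.one_def] using norm_id_le
  · exact norm_pow_le' T n.succ_pos

lemma summable_and_tsum_le_of_le_two_mul_div_three_pow {b : ℕ → ℝ} {M : ℝ}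
    (hb : ∀ n, 0 ≤ b n) (hbn : ∀ n, b (n + 1) ≤ 2 * (M - b 0) / 3 ^ (n + 1)) :
    Summable b ∧ ∑' n, b n ≤ M := by
  have hgeom : HasSum (fun n : ℕ ↦ 2 * (M - b 0) / 3 ^ (n + 1)) (M - b 0) := by
    have := (hasSum_geometric_of_lt_one (r := (3 : ℝ)⁻¹) (by norm_num) (by norm_num)).mul_left
      (2 * (M - b 0) / 3)
    rw [show 2 * (M - b 0) / 3 * (1 - 3⁻¹)⁻¹ = M - b 0 by norm_num; ring] at this
    exact this.congr_fun fun n ↦ by rw [inv_pow, pow_succ]; ring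
  have hshift : Summable fun n ↦ b (n + 1) :=
    hgeom.summable.of_nonneg_of_le (fun n ↦ hb _) hbn
  have hsum : Summable b := (summable_nat_add_iff 1).1 hshift
  refine ⟨hsum, ?_⟩
  rw [hsum.tsum_eq_zero_add]
  linarith [hshift.tsum_le_tsum hbn hgeom.summable, hgeom.tsum_eq]

theorem stmt_5_general (X : Type*) [NormedAddCommGroup X] [NormedSpace ℂ X]
    (R : ℝ) (hR : 0 < R) (T : X →L[ℂ] X) (hT : ‖T‖ ≤ R / 3)
    (f : ℂ → ℂ) (a : ℕ → ℂ)
    (hbd : BddAbove ((fun w => ‖f w‖) '' ball (0 : ℂ) R))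
    (ha : ∀ z ∈ ball (0 : ℂ) R, HasSum (fun n => a n * z ^ n) (f z)) :
    Summable (fun n => ‖a n • T ^ n‖) ∧
      ‖∑' n, a n • T ^ n‖ ≤ sSup ((fun w => ‖f w‖) '' ball (0 : ℂ) R) := by
  set M := sSup ((fun w => ‖f w‖) '' ball (0 : ℂ) R)
  have hM : ∀ z ∈ ball (0 : ℂ) R, ‖f z‖ ≤ M := fun z hz ↦ le_csSup hbd ⟨z, hz, rfl⟩
  have hterm : ∀ n, ‖a n • T ^ n‖ ≤ ‖a n‖ * (R / 3) ^ n := fun n ↦ by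
    rw [norm_smul]
    gcongr
    exact (T.norm_pow_le_pow_norm n).trans (pow_le_pow_left₀ (norm_nonneg T) hT n)
  obtain ⟨hsum, hle⟩ := summable_and_tsum_le_of_le_two_mul_div_three_pow
    (b := fun n ↦ ‖a n‖ * (R / 3) ^ n) (M := M) (fun n ↦ by positivity) fun n ↦ by
      simpa [div_pow, mul_div_assoc] using div_le_div_of_nonneg_right
        (norm_coeff_mul_pow_le hR ha hM n.succ_ne_zero) (pow_nonneg zero_le_three (n + 1))
  have hnorm : Summable fun n ↦ ‖a n • T ^ n‖ := hsum.of_nonneg_of_le (fun _ ↦ norm_nonneg _) hterm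
  refine ⟨hnorm, ?_⟩
  calc ‖∑' n, a n • T ^ n‖ ≤ ∑' n, ‖a n • T ^ n‖ := norm_tsum_le_tsum_norm hnorm
    _ ≤ ∑' n, ‖a n‖ * (R / 3) ^ n := hnorm.tsum_le_tsum hterm hsum
    _ ≤ M := hle

/-- **Power-series von Neumann inequality for operators of norm at most `R/3`.**
If `X` is a complex Banach space, `T` a bounded operator on `X` with `‖T‖ ≤ R / 3`, and `f`
a bounded holomorphic function on the open disk `D_R` with power series `f z = ∑ aₙ zⁿ`, then
`∑ aₙ Tⁿ` converges absolutely in operator norm and `‖∑ aₙ Tⁿ‖ ≤ sup_{w ∈ D_R} |f w|`. -/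
theorem stmt_5 (X : Type*) [NormedAddCommGroup X] [NormedSpace ℂ X] [CompleteSpace X]
    (R : ℝ) (hR : 0 < R) (T : X →L[ℂ] X) (hT : ‖T‖ ≤ R / 3)
    (f : ℂ → ℂ) (a : ℕ → ℂ)
    (hf : DifferentiableOn ℂ f (ball (0 : ℂ) R))
    (hbd : BddAbove ((fun w => ‖f w‖) '' ball (0 : ℂ) R))
    (ha : ∀ z ∈ ball (0 : ℂ) R, HasSum (fun n => a n * z ^ n) (f z)) :
    Summable (fun n => ‖a n • T ^ n‖) ∧
      ‖∑' n, a n • T ^ n‖ ≤ sSup ((fun w => ‖f w‖) '' ball (0 : ℂ) R) :=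
  stmt_5_general X R hR T hT f a hbd ha
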